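/- arXiv:0810.2327 — 2 statements merged into one kernel-verified Lean document; each statement's English description precedes it below -/
import Mathlib

section
/- Let {M_k}_{k=1}^n be a POVM on ℂ^d such that M_k = (d/n)·P_k for rank-one projectors P_k forming a proper spherical 2-design, i.e., (1/n)·Σ_k P_k ⊗ P_k = (𝟙 + F)/(d(d+1)) where F is the swap operator on ℂ^d ⊗ ℂ^d. Then for any traceless Hermitian operator ξ on ℂ^d, Σ_{k=1}^n |Tr(ξ M_k)| ≥ (1/(2(d+1)))·‖ξ‖₁. -/
open Kronecker ComplexOrder

/-- The swap operator `F` on `ℂ^d ⊗ ℂ^d`. -/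
def swapOp (d : ℕ) : Matrix (Fin d × Fin d) (Fin d × Fin d) ℂ :=
  fun p q => if p.1 = q.2 ∧ p.2 = q.1 then 1 else 0

/-- The trace norm of a Hermitian matrix: sum of absolute values of its eigenvalues. -/
noncomputable def traceNorm {d : ℕ} {A : Matrix (Fin d) (Fin d) ℂ}
    (hA : A.IsHermitian) : ℝ :=
  ∑ i, |hA.eigenvalues i|

/-!
Let `S = sgn ξ`, defined by functional calculus. Since `-1 ≤ S ≤ 1` and each `P_k` is a projector
of trace one, `|Tr(S P_k)| ≤ 1`, so `∑ₖ |Tr(ξ P_k)| ≥ |∑ₖ Tr(S P_k) Tr(ξ P_k)|`. Pairing the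
2-design identity with `S ⊗ ξ` evaluates the right-hand sum as
`n / (d (d + 1)) · (Tr S · Tr ξ + Tr(S ξ)) = n / (d (d + 1)) · ‖ξ‖₁`, because `Tr ξ = 0` and
`S ξ = |ξ|`. Multiplying by `d / n` gives `∑ₖ |Tr(ξ M_k)| ≥ ‖ξ‖₁ / (d + 1)`.
-/

open Matrix MatrixOrder

lemma RCLike.norm_le_one_of_neg_one_le_of_le_one {𝕜 : Type*} [RCLike 𝕜] {z : 𝕜}
    (h₀ : -1 ≤ z) (h₁ : z ≤ 1) : ‖z‖ ≤ 1 := by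
  rw [RCLike.le_iff_re_im] at h₀ h₁
  simp only [map_neg, RCLike.one_re, RCLike.one_im] at h₀ h₁
  rw [← RCLike.re_add_im z, h₁.2, RCLike.ofReal_zero, zero_mul, add_zero, RCLike.norm_ofReal,
    abs_le]
  exact ⟨h₀.1, h₁.1⟩

lemma abs_sign_le_one {α : Type*} [Ring α] [LinearOrder α] [IsStrictOrderedRing α] (x : α) :
    |(SignType.sign x : α)| ≤ 1 := by
  rcases lt_trichotomy x 0 with h | h | h <;> simp [h]

namespace Matrix

variable {m 𝕜 : Type*} [Fintype m] [RCLike 𝕜]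

lemma trace_mul_le_trace_mul_of_le {A B P : Matrix m m 𝕜} (hAB : A ≤ B) (hP : P.IsHermitian)
    (hPP : P * P = P) : (A * P).trace ≤ (B * P).trace := by
  have h_conj (X : Matrix m m 𝕜) : (X * P).trace = (star P * X * P).trace := by
    rw [star_eq_conjTranspose, hP.eq, trace_mul_cycle, hPP, trace_mul_comm]
  rw [h_conj A, h_conj B, ← sub_nonneg, ← trace_sub]
  exact (sub_nonneg.mpr (star_left_conjugate_le_conjugate hAB P)).posSemidef.trace_nonneg

variable [DecidableEq m] {A : Matrix m m 𝕜}

lemma IsHermitian.trace_cfc (hA : A.IsHermitian) (f : ℝ → ℝ) :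
    (cfc f A).trace = ∑ i, (f (hA.eigenvalues i) : 𝕜) := by
  rw [hA.cfc_eq, IsHermitian.cfc, Unitary.conjStarAlgAut_apply, trace_mul_cycle,
    Unitary.coe_star_mul_self, one_mul, trace_diagonal]
  rfl

lemma IsHermitian.trace_cfc_sign_mul_self (hA : A.IsHermitian) :
    (cfc (fun x : ℝ => (SignType.sign x : ℝ)) A * A).trace
      = ∑ i, ((|hA.eigenvalues i| : ℝ) : 𝕜) := by
  conv_lhs => enter [1, 2]; rw [← cfc_id' ℝ A]
  rw [← cfc_mul _ _ A (finite_real_spectrum.continuousOn _), hA.trace_cfc]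
  simp only [sign_mul_self]

lemma neg_one_le_cfc_sign (hA : A.IsHermitian) :
    -1 ≤ cfc (fun x : ℝ => (SignType.sign x : ℝ)) A := by
  simpa using algebraMap_le_cfc _ (-1 : ℝ) A (fun x _ => (abs_le.mp (abs_sign_le_one x)).1)
    (finite_real_spectrum.continuousOn _)

lemma cfc_sign_le_one : cfc (fun x : ℝ => (SignType.sign x : ℝ)) A ≤ 1 :=
  cfc_le_one _ A fun x _ => (abs_le.mp (abs_sign_le_one x)).2

end Matrix

lemma trace_kronecker_mul_swapOp {d : ℕ} (A B : Matrix (Fin d) (Fin d) ℂ) :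
    ((A ⊗ₖ B) * swapOp d).trace = (A * B).trace := by
  simp only [trace, diag, mul_apply, swapOp, kroneckerMap_apply, mul_ite, mul_one, mul_zero,
    Fintype.sum_prod_type]
  simp [ite_and, Finset.sum_ite_eq']

lemma traceNorm_nonneg {d : ℕ} {A : Matrix (Fin d) (Fin d) ℂ} (hA : A.IsHermitian) :
    0 ≤ traceNorm hA :=
  Finset.sum_nonneg fun _ _ => abs_nonneg _

def IsTwoDesign {d n : ℕ} (P : Fin n → Matrix (Fin d) (Fin d) ℂ) : Prop :=
  (1 / (n : ℂ)) • ∑ k, P k ⊗ₖ P k = (1 / ((d : ℂ) * (d + 1))) • (1 + swapOp d)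

namespace IsTwoDesign

variable {d n : ℕ} {P : Fin n → Matrix (Fin d) (Fin d) ℂ}

lemma sum_trace_mul_trace (hP : IsTwoDesign P) (A B : Matrix (Fin d) (Fin d) ℂ) :
    ∑ k, (A * P k).trace * (B * P k).trace
      = (n : ℂ) / (d * (d + 1)) * (A.trace * B.trace + (A * B).trace) := by
  obtain rfl | hn := n.eq_zero_or_pos
  · simp
  have h := congrArg (fun X => ((A ⊗ₖ B) * X).trace) hP
  simp only [Matrix.mul_smul, trace_smul, Matrix.mul_sum, trace_sum, Matrix.mul_add,
    Matrix.mul_one, trace_add, ← mul_kronecker_mul, trace_kronecker, trace_kronecker_mul_swapOp,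
    smul_eq_mul] at h
  rw [div_eq_mul_one_div, mul_assoc, ← h, ← mul_assoc,
    mul_one_div_cancel (Nat.cast_ne_zero.mpr hn.ne'), one_mul]

lemma mul_traceNorm_le_sum_norm_trace_mul (hP : IsTwoDesign P)
    (hherm : ∀ k, (P k).IsHermitian) (hidem : ∀ k, P k * P k = P k)
    (hrank1 : ∀ k, (P k).trace = 1)
    {ξ : Matrix (Fin d) (Fin d) ℂ} (hξ : ξ.IsHermitian) (hξ0 : ξ.trace = 0) :
    (n : ℝ) / (d * (d + 1)) * traceNorm hξ ≤ ∑ k, ‖(ξ * P k).trace‖ := by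
  set S := cfc (fun x : ℝ => (SignType.sign x : ℝ)) ξ
  have hSP (k : Fin n) : ‖(S * P k).trace‖ ≤ 1 := by
    refine RCLike.norm_le_one_of_neg_one_le_of_le_one ?_ ?_
    · simpa [hrank1] using
        trace_mul_le_trace_mul_of_le (neg_one_le_cfc_sign hξ) (hherm k) (hidem k)
    · simpa [hrank1] using trace_mul_le_trace_mul_of_le cfc_sign_le_one (hherm k) (hidem k)
  have hsum : ∑ k, (S * P k).trace * (ξ * P k).trace
      = (((n : ℝ) / (d * (d + 1)) * traceNorm hξ : ℝ) : ℂ) := by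
    rw [hP.sum_trace_mul_trace, hξ0, mul_zero, zero_add, hξ.trace_cfc_sign_mul_self, traceNorm]
    push_cast
    rfl
  calc (n : ℝ) / (d * (d + 1)) * traceNorm hξ
      = ‖∑ k, (S * P k).trace * (ξ * P k).trace‖ := by
        rw [hsum, Complex.norm_real, Real.norm_of_nonneg (by positivity [traceNorm_nonneg hξ])]
    _ ≤ ∑ k, ‖(S * P k).trace‖ * ‖(ξ * P k).trace‖ :=
        norm_sum_le_of_le _ fun k _ => norm_mul_le _ _
    _ ≤ ∑ k, ‖(ξ * P k).trace‖ :=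
        Finset.sum_le_sum fun k _ => mul_le_of_le_one_left (norm_nonneg _) (hSP k)

end IsTwoDesign

/-- For a POVM `M_k = (d/n) P_k` built from a proper spherical 2-design of rank-one
projectors `P_k`, and any traceless Hermitian `ξ`,
`Σ_k |Tr(ξ M_k)| ≥ ‖ξ‖₁ / (2(d+1))`. -/
theorem two_design_povm_bias {d n : ℕ} (hd : 0 < d) (hn : 0 < n)
    (P : Fin n → Matrix (Fin d) (Fin d) ℂ)
    (hherm : ∀ k, (P k).IsHermitian)
    (hidem : ∀ k, P k * P k = P k)
    (hrank1 : ∀ k, (P k).trace = 1)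
    (hdesign : (1 / (n : ℂ)) • ∑ k, P k ⊗ₖ P k
      = (1 / ((d : ℂ) * (d + 1))) • (1 + swapOp d))
    (ξ : Matrix (Fin d) (Fin d) ℂ) (hξ : ξ.IsHermitian) (hξ0 : ξ.trace = 0) :
    ∑ k, ‖(ξ * (((d : ℂ) / n) • P k)).trace‖
      ≥ (1 / (2 * (d + 1) : ℝ)) * traceNorm hξ := by
  have hbound :=
    IsTwoDesign.mul_traceNorm_le_sum_norm_trace_mul hdesign hherm hidem hrank1 hξ hξ0
  have hscale : ∑ k, ‖(ξ * (((d : ℂ) / n) • P k)).trace‖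
      = (d : ℝ) / n * ∑ k, ‖(ξ * P k).trace‖ := by
    simp [trace_smul, Finset.mul_sum]
  have hd' : (0 : ℝ) < d := by exact_mod_cast hd
  have hn' : (0 : ℝ) < n := by exact_mod_cast hn
  have ht := traceNorm_nonneg hξ
  rw [ge_iff_le, hscale]
  calc 1 / (2 * (d + 1) : ℝ) * traceNorm hξ
      ≤ traceNorm hξ / (d + 1) := by
        rw [one_div_mul_eq_div]
        exact div_le_div_of_nonneg_left ht (by positivity) (by linarith)
    _ = (d : ℝ) / n * ((n : ℝ) / (d * (d + 1)) * traceNorm hξ) := by field_simp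
    _ ≤ (d : ℝ) / n * ∑ k, ‖(ξ * P k).trace‖ := by gcongr
end

section
/- Let (p_k, P_k) be a weighted spherical 4-design POVM on ℂ^d with POVM elements M_k = d·p_k·P_k, and let ρ, σ be density operators. Then Σ_k |Tr((ρ−σ)M_k)| ≥ (1/3)·‖ρ−σ‖₂ ≥ (1/(3√d))·‖ρ−σ‖₁, where ‖·‖₂ is the Hilbert–Schmidt norm. -/
open ComplexOrder

/-- The 4-fold tensor power of a matrix on `ℂ^d`, as a matrix on `(ℂ^d)^{⊗4}`
with index type `Fin 4 → Fin d`. -/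
def tpow4 {d : ℕ} (A : Matrix (Fin d) (Fin d) ℂ) :
    Matrix (Fin 4 → Fin d) (Fin 4 → Fin d) ℂ :=
  fun a b => ∏ i, A (a i) (b i)

/-- The unitary permuting the four tensor factors of `(ℂ^d)^{⊗4}` according to `π`. -/
def permOp (d : ℕ) (π : Equiv.Perm (Fin 4)) :
    Matrix (Fin 4 → Fin d) (Fin 4 → Fin d) ℂ :=
  fun a b => if ∀ i, a (π i) = b i then 1 else 0

/-!
Write `ξ = ρ - σ` (Hermitian and traceless) and `S_k = Tr(ξ P_k)`, a random variable with
law `p`. Since `Σ_k |Tr(ξ M_k)| = d·E|S|`, Berger's inequality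
`E|S| ≥ (E S²)^{3/2} / (E S⁴)^{1/2}` reduces the claim to the moments of `S`. Pairing the 4-design identity with `A ⊗ B ⊗ C ⊗ D`
turns `E[Π Tr(· P)]` into `Σ_{π ∈ S₄} Tr((A ⊗ B ⊗ C ⊗ D) P_π)`, a sum of products of traces
along the cycles of `π`; removing the point `0` from the cycles gives a recursion that evaluates
this sum. Hence `E S² = Tr ξ² / (d(d+1))` and `E S⁴ = (3 (Tr ξ²)² + 6 Tr ξ⁴) / (d(d+1)(d+2)(d+3))`,
and `Tr ξ⁴ ≤ (Tr ξ²)²`. The trace-norm bound is Cauchy–Schwarz on the eigenvalues of `ξ`.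
-/

open Finset Matrix Equiv

theorem Fin.sum_univ_fun_succ {α M : Type*} [Fintype α] [AddCommMonoid M] {n : ℕ}
    (g : (Fin (n + 1) → α) → M) : ∑ a, g a = ∑ x, ∑ b, g (Fin.cons x b) := by
  rw [← Fintype.sum_prod_type']
  exact (Fintype.sum_equiv (Fin.consEquiv fun _ => α) _ _ fun _ => rfl).symm

namespace Matrix

theorem update_vecCons_zero {α : Type*} {n : ℕ} (a x : α) (u : Fin n → α) :
    Function.update (vecCons a u) 0 x = vecCons x u :=
  Fin.update_cons_zero (α := fun _ => α) a u x

theorem update_vecCons_succ {α : Type*} {n : ℕ} (a x : α) (u : Fin n → α) (i : Fin n) :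
    Function.update (vecCons a u) i.succ x = vecCons a (Function.update u i x) :=
  (Fin.cons_update (α := fun _ => α) a u i x).symm

variable {m R : Type*} [Fintype m] [CommRing R]

/-- `Tr((f₀ ⊗ ⋯ ⊗ fₙ₋₁) P_π⁻¹)`: the product, over the cycles of `π`, of the traces of the
products of the `fᵢ` along each cycle. -/
def permTrace {n : ℕ} (f : Fin n → Matrix m m R) (π : Perm (Fin n)) : R :=
  ∑ a : Fin n → m, ∏ i, f i (a i) (a (π i))

theorem permTrace_decomposeFin_symm_zero {n : ℕ} (A : Matrix m m R) (g : Fin n → Matrix m m R)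
    (σ : Perm (Fin n)) :
    permTrace (vecCons A g) (Perm.decomposeFin.symm (0, σ)) = trace A * permTrace g σ := by
  simp only [permTrace, Fin.sum_univ_fun_succ, Fin.prod_univ_succ,
    Perm.decomposeFin_symm_apply_zero, Perm.decomposeFin_symm_apply_succ, swap_self, refl_apply, cons_val_zero, cons_val_succ,
    Fin.cons_zero, Fin.cons_succ, trace, diag, sum_mul_sum]

/-- Inserting `0` into the cycle of `σ` just before `j` amounts to contracting the index
`0` away, i.e. to multiplying the matrix sitting before `j` on that cycle by `A`. -/
theorem permTrace_decomposeFin_symm_succ {n : ℕ} (A : Matrix m m R) (g : Fin n → Matrix m m R)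
    (j : Fin n) (σ : Perm (Fin n)) :
    permTrace (vecCons A g) (Perm.decomposeFin.symm (j.succ, σ)) =
      permTrace (Function.update g (σ.symm j) (g (σ.symm j) * A)) σ := by
  set k := σ.symm j
  have hk : σ k = j := σ.apply_symm_apply j
  have hcons (x : m) (b : Fin n → m) (i : Fin n) :
      (Fin.cons x b : Fin (n + 1) → m) (Equiv.swap 0 j.succ (σ i).succ) =
        if i = k then x else b (σ i) := by
    split_ifs with hi
    · rw [hi, hk, swap_apply_right, Fin.cons_zero]
    · have : σ i ≠ j := fun h => hi (σ.injective (h.trans hk.symm))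
      rw [swap_apply_of_ne_of_ne (Fin.succ_ne_zero _) (by simpa using this), Fin.cons_succ]
  simp only [permTrace, Fin.sum_univ_fun_succ, Fin.prod_univ_succ,
    Perm.decomposeFin_symm_apply_zero, Perm.decomposeFin_symm_apply_succ, cons_val_zero, cons_val_succ, Fin.cons_zero, Fin.cons_succ,
    hcons]
  rw [sum_comm]
  refine sum_congr rfl fun b _ => ?_
  rw [← mul_prod_erase _ _ (mem_univ k)]
  simp only [Function.update_self, mul_apply, hk, sum_mul]
  refine sum_congr rfl fun x _ => ?_
  have hrest : ∏ i ∈ univ.erase k, g i (b i) (if i = k then x else b (σ i)) =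
      ∏ i ∈ univ.erase k, Function.update g k (g k * A) i (b i) (b (σ i)) :=
    prod_congr rfl fun i hi => by
      rw [if_neg (ne_of_mem_erase hi), Function.update_of_ne (ne_of_mem_erase hi)]
  rw [← mul_prod_erase _ _ (mem_univ k), if_pos rfl, hrest]
  ring

theorem sum_permTrace_zero (f : Fin 0 → Matrix m m R) : ∑ π, permTrace f π = 1 := by
  simp [permTrace]

theorem sum_permTrace_cons {n : ℕ} (A : Matrix m m R) (g : Fin n → Matrix m m R) :
    ∑ π, permTrace (vecCons A g) π =
      trace A * ∑ σ, permTrace g σ + ∑ k, ∑ σ, permTrace (Function.update g k (g k * A)) σ := by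
  rw [← Perm.decomposeFin.symm.sum_comp, Fintype.sum_prod_type, Fin.sum_univ_succ]
  simp only [permTrace_decomposeFin_symm_zero, permTrace_decomposeFin_symm_succ, ← mul_sum]
  congr 1
  rw [sum_comm, sum_comm (s := univ (α := Fin n))]
  exact sum_congr rfl fun σ _ =>
    σ.symm.sum_comp fun k => permTrace (Function.update g k (g k * A)) σ

/-- The cycle index of `S₄`. -/
theorem sum_permTrace_const_four [DecidableEq m] (A : Matrix m m R) :
    ∑ π, permTrace ![A, A, A, A] π =
      trace A ^ 4 + 6 * trace A ^ 2 * trace (A ^ 2) + 3 * trace (A ^ 2) ^ 2 +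
        8 * trace A * trace (A ^ 3) + 6 * trace (A ^ 4) := by
  simp only [sum_permTrace_cons, sum_permTrace_zero, Fin.sum_univ_succ, Fin.sum_univ_zero,
    update_vecCons_zero, update_vecCons_succ, cons_val_zero, cons_val_succ, pow_succ, pow_zero,
    one_mul, mul_assoc]
  ring

theorem sum_permTrace_two_ones [DecidableEq m] (A B : Matrix m m R) :
    ∑ π, permTrace ![A, B, 1, 1] π =
      (Fintype.card m + 2) * (Fintype.card m + 3) * (trace A * trace B + trace (A * B)) := by
  simp only [sum_permTrace_cons, sum_permTrace_zero, Fin.sum_univ_succ, Fin.sum_univ_zero,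
    update_vecCons_zero, update_vecCons_succ, cons_val_zero, cons_val_succ, one_mul, mul_one,
    trace_one]
  rw [trace_mul_comm B A]
  ring

section Kronecker

variable {ι m R : Type*} [Fintype ι] [Fintype m] [CommRing R]

def piKronecker (f : ι → Matrix m m R) : Matrix (ι → m) (ι → m) R :=
  fun a b => ∏ i, f i (a i) (b i)

theorem trace_piKronecker_mul_piKronecker [DecidableEq ι] (f g : ι → Matrix m m R) :
    (piKronecker f * piKronecker g).trace = ∏ i, (f i * g i).trace := by
  simp only [trace, Matrix.diag, mul_apply, piKronecker, ← prod_mul_distrib, prod_univ_sum,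
    Fintype.piFinset_univ]

end Kronecker

end Matrix

theorem trace_piKronecker_mul_permOp {d : ℕ} (f : Fin 4 → Matrix (Fin d) (Fin d) ℂ)
    (π : Perm (Fin 4)) : (piKronecker f * permOp d π).trace = permTrace f π⁻¹ := by
  have hperm (a b : Fin 4 → Fin d) : (∀ i, b (π i) = a i) ↔ b = fun j => a (π⁻¹ j) := by
    refine ⟨fun h => funext fun j => by simpa using h (π⁻¹ j), ?_⟩
    rintro rfl i
    simp
  simp only [trace, Matrix.diag, mul_apply, piKronecker, permOp, permTrace, hperm, mul_ite,
    mul_one, mul_zero, sum_ite_eq', mem_univ, if_true]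

theorem sum_trace_piKronecker_mul_permOp {d : ℕ} (f : Fin 4 → Matrix (Fin d) (Fin d) ℂ) :
    ∑ π, (piKronecker f * permOp d π).trace = ∑ π, permTrace f π := by
  simp only [trace_piKronecker_mul_permOp]
  exact Fintype.sum_equiv (Equiv.inv _) _ _ fun _ => rfl

def IsWeightedFourDesign {d n : ℕ} (p : Fin n → ℝ) (P : Fin n → Matrix (Fin d) (Fin d) ℂ) :
    Prop :=
  ∑ k, (p k : ℂ) • tpow4 (P k)
    = (1 / ((d : ℂ) * (d + 1) * (d + 2) * (d + 3))) • ∑ π : Equiv.Perm (Fin 4), permOp d π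

theorem sum_mul_prod_trace_of_design {d n : ℕ} {p : Fin n → ℝ}
    {P : Fin n → Matrix (Fin d) (Fin d) ℂ} (hdesign : IsWeightedFourDesign p P)
    (f : Fin 4 → Matrix (Fin d) (Fin d) ℂ) :
    ∑ k, (p k : ℂ) * ∏ i, (f i * P k).trace =
      (1 / ((d : ℂ) * (d + 1) * (d + 2) * (d + 3))) * ∑ π, permTrace f π := by
  have h := congrArg (fun X => (piKronecker f * X).trace) (show _ = _ from hdesign)
  simp only [Matrix.mul_sum, Matrix.mul_smul, trace_sum, trace_smul, smul_eq_mul,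
    sum_trace_piKronecker_mul_permOp] at h
  rw [← h]
  exact sum_congr rfl fun k _ =>
    congrArg _ (trace_piKronecker_mul_piKronecker f fun _ => P k).symm

namespace Matrix.IsHermitian

variable {n : Type*} [Fintype n] {A : Matrix n n ℂ}

theorem trace_pow_eq_sum_eigenvalues_pow [DecidableEq n] (hA : A.IsHermitian) (k : ℕ) :
    (A ^ k).trace = ∑ i, ((hA.eigenvalues i ^ k : ℝ) : ℂ) := by
  conv_lhs => rw [hA.spectral_theorem]
  rw [← map_pow, diagonal_pow, Unitary.conjStarAlgAut_apply, trace_mul_cycle,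
    Unitary.coe_star_mul_self, one_mul, trace_diagonal]
  simp

theorem re_trace_mul_self [DecidableEq n] (hA : A.IsHermitian) :
    (A * A).trace.re = ∑ i, hA.eigenvalues i ^ 2 := by
  rw [← sq, hA.trace_pow_eq_sum_eigenvalues_pow, ← Complex.ofReal_sum, Complex.ofReal_re]

theorem ofReal_re_trace_mul (hA : A.IsHermitian) {B : Matrix n n ℂ} (hB : B.IsHermitian) :
    (((A * B).trace.re : ℝ) : ℂ) = (A * B).trace := by
  refine Complex.conj_eq_iff_re.mp ?_
  rw [← Complex.star_def, ← trace_conjTranspose, conjTranspose_mul, hA.eq, hB.eq,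
    trace_mul_comm]

end Matrix.IsHermitian

theorem traceNorm_le_sqrt_card_mul {d : ℕ} {A : Matrix (Fin d) (Fin d) ℂ} (hA : A.IsHermitian) :
    traceNorm hA ≤ √d * √(A * A).trace.re := by
  rw [hA.re_trace_mul_self, ← Real.sqrt_mul (Nat.cast_nonneg d), traceNorm]
  refine Real.le_sqrt_of_sq_le ?_
  simpa only [card_univ, Fintype.card_fin, sq_abs] using
    sq_sum_le_card_mul_sum_sq (s := univ) (f := fun i => |hA.eigenvalues i|)

/-- Berger's inequality `(E S²)³ ≤ (E |S|)² E S⁴`, from Cauchy–Schwarz applied twice. -/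
theorem sum_mul_sq_pow_three_le {ι : Type*} (s : Finset ι) {p v : ι → ℝ}
    (hp : ∀ i ∈ s, 0 ≤ p i) :
    (∑ i ∈ s, p i * v i ^ 2) ^ 3 ≤ (∑ i ∈ s, p i * |v i|) ^ 2 * ∑ i ∈ s, p i * v i ^ 4 := by
  set m1 := ∑ i ∈ s, p i * |v i|
  set m2 := ∑ i ∈ s, p i * v i ^ 2
  set m3 := ∑ i ∈ s, p i * |v i| ^ 3
  set m4 := ∑ i ∈ s, p i * v i ^ 4
  have h13 : m2 ^ 2 ≤ m1 * m3 :=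
    sum_sq_le_sum_mul_sum_of_sq_le_mul s (fun i hi => mul_nonneg (hp i hi) (abs_nonneg _))
      (fun i hi => mul_nonneg (hp i hi) (by positivity)) fun i _ =>
        le_of_eq (by rw [← even_two.pow_abs (v i)]; ring)
  have h24 : m3 ^ 2 ≤ m2 * m4 :=
    sum_sq_le_sum_mul_sum_of_sq_le_mul s (fun i hi => mul_nonneg (hp i hi) (sq_nonneg _))
      (fun i hi => mul_nonneg (hp i hi) (by positivity)) fun i _ =>
        le_of_eq (by rw [← even_two.pow_abs (v i), ← (by decide : Even 4).pow_abs (v i)]; ring)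
  have hm1 : 0 ≤ m1 := sum_nonneg fun i hi => mul_nonneg (hp i hi) (abs_nonneg _)
  have hm2 : 0 ≤ m2 := sum_nonneg fun i hi => mul_nonneg (hp i hi) (sq_nonneg _)
  have hm4 : 0 ≤ m4 := sum_nonneg fun i hi => mul_nonneg (hp i hi) (by positivity)
  rcases hm2.eq_or_lt with h | h
  · rw [← h, zero_pow three_ne_zero]
    positivity
  · refine le_of_mul_le_mul_left ?_ h
    calc m2 * m2 ^ 3 = (m2 ^ 2) ^ 2 := by ring
      _ ≤ (m1 * m3) ^ 2 := pow_le_pow_left₀ (sq_nonneg _) h13 2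
      _ = m1 ^ 2 * m3 ^ 2 := by ring
      _ ≤ m1 ^ 2 * (m2 * m4) := mul_le_mul_of_nonneg_left h24 (sq_nonneg _)
      _ = m2 * (m1 ^ 2 * m4) := by ring

/-- `m₁² ≥ m₂³ / m₄ ≥ t (d+2)(d+3) / (9 d² (d+1)²) ≥ t / (9 d²)`. -/
theorem sqrt_div_three_le_of_moments {d t m1 m2 m4 : ℝ} (hd : 0 ≤ d) (ht : 0 ≤ t) (hm1 : 0 ≤ m1)
    (hberger : m2 ^ 3 ≤ m1 ^ 2 * m4) (h2 : m2 * (d * (d + 1)) = t)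
    (h4 : m4 * (d * (d + 1) * (d + 2) * (d + 3)) ≤ 9 * t ^ 2) :
    1 / 3 * √t ≤ d * m1 := by
  suffices t ≤ (3 * (d * m1)) ^ 2 by
    have := Real.sqrt_le_sqrt this
    rw [Real.sqrt_sq (by positivity)] at this
    linarith
  rcases ht.eq_or_lt with rfl | ht
  · positivity
  set a := d * (d + 1)
  set c := (d + 2) * (d + 3)
  have hc : 0 < c := by positivity
  have ha : a ^ 2 ≤ d ^ 2 * c := by
    simp only [a, c, mul_pow]
    exact mul_le_mul_of_nonneg_left (by nlinarith) (sq_nonneg d)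
  have hcube : t ^ 3 * c ≤ 9 * t ^ 2 * m1 ^ 2 * a ^ 2 := by
    calc t ^ 3 * c = m2 ^ 3 * a ^ 3 * c := by rw [← h2]; ring
      _ ≤ m1 ^ 2 * m4 * a ^ 3 * c := by gcongr
      _ = m1 ^ 2 * a ^ 2 * (m4 * (a * c)) := by ring
      _ ≤ m1 ^ 2 * a ^ 2 * (9 * t ^ 2) :=
        mul_le_mul_of_nonneg_left (by simpa only [a, c, mul_assoc] using h4) (by positivity)
      _ = 9 * t ^ 2 * m1 ^ 2 * a ^ 2 := by ring
  have htc : t * c ≤ 9 * m1 ^ 2 * a ^ 2 :=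
    le_of_mul_le_mul_left (by nlinarith [hcube]) (pow_pos ht 2)
  have : t * c ≤ (3 * (d * m1)) ^ 2 * c := by
    nlinarith [mul_le_mul_of_nonneg_left ha (sq_nonneg (3 * m1))]
  exact le_of_mul_le_mul_right this hc

section Design

variable {d n : ℕ} {p : Fin n → ℝ} {P : Fin n → Matrix (Fin d) (Fin d) ℂ}
  {ξ : Matrix (Fin d) (Fin d) ℂ}

theorem sum_mul_sq_re_trace_of_design (hd : 0 < d) (hherm : ∀ k, (P k).IsHermitian)
    (htr : ∀ k, (P k).trace = 1)
    (hdesign : IsWeightedFourDesign p P) (hξ : ξ.IsHermitian) (h0 : ξ.trace = 0) :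
    (∑ k, p k * (ξ * P k).trace.re ^ 2) * (d * (d + 1)) = ∑ i, hξ.eigenvalues i ^ 2 := by
  have e := sum_mul_prod_trace_of_design hdesign ![ξ, ξ, 1, 1]
  rw [sum_permTrace_two_ones] at e
  simp only [Fin.prod_univ_four, Matrix.cons_val, one_mul, htr, mul_one, h0, ne_eq,
    OfNat.ofNat_ne_zero, not_false_eq_true, zero_pow, zero_add,
    Fintype.card_fin, ← sq, hξ.trace_pow_eq_sum_eigenvalues_pow] at e
  apply Complex.ofReal_injective
  push_cast at e ⊢
  simp_rw [hξ.ofReal_re_trace_mul (hherm _), e]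
  have hd0 : (d : ℂ) ≠ 0 := by exact_mod_cast hd.ne'
  field_simp

theorem sum_mul_pow_four_re_trace_of_design (hd : 0 < d) (hherm : ∀ k, (P k).IsHermitian)
    (hdesign : IsWeightedFourDesign p P) (hξ : ξ.IsHermitian) (h0 : ξ.trace = 0) :
    (∑ k, p k * (ξ * P k).trace.re ^ 4) * (d * (d + 1) * (d + 2) * (d + 3)) =
      3 * (∑ i, hξ.eigenvalues i ^ 2) ^ 2 + 6 * ∑ i, hξ.eigenvalues i ^ 4 := by
  have e := sum_mul_prod_trace_of_design hdesign ![ξ, ξ, ξ, ξ]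
  rw [sum_permTrace_const_four] at e
  simp only [Fin.prod_univ_four, Matrix.cons_val, h0, ne_eq,
    OfNat.ofNat_ne_zero, not_false_eq_true, zero_pow, mul_zero, zero_mul, zero_add, add_zero,
    ← sq, ← pow_succ, hξ.trace_pow_eq_sum_eigenvalues_pow] at e
  apply Complex.ofReal_injective
  push_cast at e ⊢
  simp_rw [hξ.ofReal_re_trace_mul (hherm _), e]
  have hd0 : (d : ℂ) ≠ 0 := by exact_mod_cast hd.ne'
  field_simp

theorem sqrt_sum_sq_eigenvalues_div_three_le_of_design (hd : 0 < d) (hp : ∀ k, 0 ≤ p k)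
    (hherm : ∀ k, (P k).IsHermitian) (htr : ∀ k, (P k).trace = 1)
    (hdesign : IsWeightedFourDesign p P) (hξ : ξ.IsHermitian) (h0 : ξ.trace = 0) :
    1 / 3 * √(∑ i, hξ.eigenvalues i ^ 2) ≤ d * ∑ k, p k * |(ξ * P k).trace.re| := by
  have h4 : ∑ i, hξ.eigenvalues i ^ 4 ≤ (∑ i, hξ.eigenvalues i ^ 2) ^ 2 := by
    simpa only [← pow_mul] using
      sum_sq_le_sq_sum_of_nonneg (s := univ) fun i _ => sq_nonneg (hξ.eigenvalues i)
  refine sqrt_div_three_le_of_moments (Nat.cast_nonneg d) (sum_nonneg fun i _ => sq_nonneg _)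
    (sum_nonneg fun k _ => mul_nonneg (hp k) (abs_nonneg _))
    (sum_mul_sq_pow_three_le univ fun k _ => hp k)
    (sum_mul_sq_re_trace_of_design hd hherm htr hdesign hξ h0) ?_
  rw [sum_mul_pow_four_re_trace_of_design hd hherm hdesign hξ h0]
  linarith

end Design

theorem four_design_povm_bias_general {d n : ℕ} (hd : 0 < d)
    (p : Fin n → ℝ) (hp : ∀ k, 0 ≤ p k)
    (P : Fin n → Matrix (Fin d) (Fin d) ℂ)
    (hherm : ∀ k, (P k).IsHermitian)
    (hrank1 : ∀ k, (P k).trace = 1)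
    (hdesign : ∑ k, (p k : ℂ) • tpow4 (P k)
      = (1 / ((d : ℂ) * (d + 1) * (d + 2) * (d + 3))) • ∑ π : Equiv.Perm (Fin 4), permOp d π)
    (ρ σ : Matrix (Fin d) (Fin d) ℂ) (hρ : ρ.PosSemidef) (hσ : σ.PosSemidef)
    (hρ1 : ρ.trace = 1) (hσ1 : σ.trace = 1) :
    ∑ k, ‖(((ρ - σ) * (((d : ℂ) * (p k : ℂ)) • P k)).trace)‖
        ≥ (1 / 3 : ℝ) * Real.sqrt ((((ρ - σ) * (ρ - σ)).trace).re)
      ∧ (1 / 3 : ℝ) * Real.sqrt ((((ρ - σ) * (ρ - σ)).trace).re)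
        ≥ (1 / (3 * Real.sqrt d)) * traceNorm (hρ.1.sub hσ.1) := by
  have hξ : (ρ - σ).IsHermitian := hρ.1.sub hσ.1
  have h0 : (ρ - σ).trace = 0 := by rw [trace_sub, hρ1, hσ1, sub_self]
  have hterm (k : Fin n) : ‖((ρ - σ) * (((d : ℂ) * (p k : ℂ)) • P k)).trace‖ =
      d * (p k * |((ρ - σ) * P k).trace.re|) := by
    rw [Matrix.mul_smul, trace_smul, smul_eq_mul, ← hξ.ofReal_re_trace_mul (hherm k),
      ← Complex.ofReal_natCast, ← Complex.ofReal_mul, ← Complex.ofReal_mul, Complex.norm_real,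
      Real.norm_eq_abs, abs_mul, abs_mul, Nat.abs_cast, abs_of_nonneg (hp k), mul_assoc,
      Complex.ofReal_re]
  refine ⟨?_, ?_⟩
  · rw [ge_iff_le, sum_congr rfl fun k _ => hterm k, ← mul_sum, hξ.re_trace_mul_self]
    exact sqrt_sum_sq_eigenvalues_div_three_le_of_design hd hp hherm hrank1 hdesign hξ h0
  · calc 1 / (3 * √d) * traceNorm hξ
        ≤ 1 / (3 * √d) * (√d * √((ρ - σ) * (ρ - σ)).trace.re) := by
          gcongr
          exact traceNorm_le_sqrt_card_mul hξ
      _ = 1 / 3 * √((ρ - σ) * (ρ - σ)).trace.re := by field_simp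

/-- For a weighted spherical 4-design POVM `M_k = d p_k P_k` and density operators
`ρ, σ`: `Σ_k |Tr((ρ−σ)M_k)| ≥ (1/3)‖ρ−σ‖₂ ≥ (1/(3√d))‖ρ−σ‖₁`. -/
theorem four_design_povm_bias {d n : ℕ} (hd : 0 < d)
    (p : Fin n → ℝ) (hp : ∀ k, 0 ≤ p k) (hps : ∑ k, p k = 1)
    (P : Fin n → Matrix (Fin d) (Fin d) ℂ)
    (hherm : ∀ k, (P k).IsHermitian)
    (hidem : ∀ k, P k * P k = P k)
    (hrank1 : ∀ k, (P k).trace = 1)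
    (hdesign : ∑ k, (p k : ℂ) • tpow4 (P k)
      = (1 / ((d : ℂ) * (d + 1) * (d + 2) * (d + 3))) • ∑ π : Equiv.Perm (Fin 4), permOp d π)
    (ρ σ : Matrix (Fin d) (Fin d) ℂ) (hρ : ρ.PosSemidef) (hσ : σ.PosSemidef)
    (hρ1 : ρ.trace = 1) (hσ1 : σ.trace = 1) :
    ∑ k, ‖(((ρ - σ) * (((d : ℂ) * (p k : ℂ)) • P k)).trace)‖
        ≥ (1 / 3 : ℝ) * Real.sqrt ((((ρ - σ) * (ρ - σ)).trace).re)
      ∧ (1 / 3 : ℝ) * Real.sqrt ((((ρ - σ) * (ρ - σ)).trace).re)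
        ≥ (1 / (3 * Real.sqrt d)) * traceNorm (hρ.1.sub hσ.1) :=
  four_design_povm_bias_general hd p hp P hherm hrank1 hdesign ρ σ hρ hσ hρ1 hσ1
end
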